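/- arXiv:2402.00226 — 3 statements merged into one kernel-verified Lean document; each statement's English description precedes it below -/
import Mathlib

section
/- Assume α < δ < ω₁, X ⊆ T_δ is finite with unique drop-downs to α, {f_τ : τ ∈ I} is a countable indexed family of automorphisms of T↾(α+1), and A ⊆ I is finite. Then there exists an indexed family {g_τ : τ ∈ I} of automorphisms of T↾(δ+1) such that: (1) f_τ ⊆ g_τ for all τ ∈ I; (2) for all τ ∈ A, X↾α and X are g_τ-consistent; and (3) if {f_τ : τ ∈ A} is separated on X↾α, then {g_τ : τ ∈ I} is separated. -/
noncomputable section

/-- The ordinal `ω₁`. -/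
def omega1 : Ordinal := (Cardinal.aleph 1).ord

/-- A normal, infinitely splitting `ω₁`-tree structure on the partial order `α`.
`height x` is the height of `x` (the order type of its set of strict predecessors,
which is linearly ordered by `pred_linear`), and `restrict x β` is the unique node
of height `β` below `x` (for `β ≤ height x`). -/
structure OmegaOneTree (α : Type) [PartialOrder α] where
  height : α → Ordinal
  restrict : α → Ordinal → α
  height_lt_omega1 : ∀ x : α, height x < omega1
  height_strictMono : ∀ {x y : α}, x < y → height x < height y
  pred_linear : ∀ {x y z : α}, y < x → z < x → y ≤ z ∨ z ≤ y
  restrict_le : ∀ (x : α) {β : Ordinal}, β ≤ height x → restrict x β ≤ x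
  height_restrict : ∀ (x : α) {β : Ordinal}, β ≤ height x → height (restrict x β) = β
  restrict_eq : ∀ {x y : α} {β : Ordinal}, y ≤ x → height y = β → restrict x β = y
  level_nonempty : ∀ β : Ordinal, β < omega1 → ∃ x : α, height x = β
  level_countable : ∀ β : Ordinal, {x : α | height x = β}.Countable
  root_exists : ∃ r : α, height r = 0 ∧ ∀ x : α, r ≤ x
  splitting : ∀ x : α, {y : α | x < y ∧ height y = height x + 1}.Infinite
  exists_above : ∀ (x : α) {β : Ordinal}, height x < β → β < omega1 →
    ∃ y : α, x < y ∧ height y = β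
  limit_eq : ∀ {x y : α}, height x = height y → Order.IsSuccLimit (height x) →
    (∀ z : α, z < x ↔ z < y) → x = y

variable {α : Type} [PartialOrder α]

/-- The pair `(g, g')` is an automorphism of `T↾(β+1)` together with its inverse:
both are level preserving on `T↾(β+1)`, mutually inverse there, and strictly
increasing there (hence `g` is an order isomorphism of `T↾(β+1)` onto itself). -/
def IsTreeAuto (T : OmegaOneTree α) (β : Ordinal) (g g' : α → α) : Prop :=
  (∀ x : α, T.height x ≤ β → T.height (g x) = T.height x) ∧
  (∀ x : α, T.height x ≤ β → T.height (g' x) = T.height x) ∧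
  (∀ x : α, T.height x ≤ β → g' (g x) = x) ∧
  (∀ x : α, T.height x ≤ β → g (g' x) = x) ∧
  (∀ x y : α, T.height y ≤ β → x < y → g x < g y) ∧
  (∀ x y : α, T.height y ≤ β → x < y → g' x < g' y)

/-- `(g, g')` extends `(f, f')` on `T↾(γ+1)` (i.e. `f ⊆ g` for automorphisms). -/
def AutoExtends (T : OmegaOneTree α) (γ : Ordinal) (f f' g g' : α → α) : Prop :=
  (∀ x : α, T.height x ≤ γ → g x = f x) ∧ (∀ x : α, T.height x ≤ γ → g' x = f' x)

/-- `X↾lo` and `X` are `g`-consistent: for all `x, y ∈ X`,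
`g(x↾lo) = y↾lo` iff `g(x) = y`. -/
def AutoConsistentSet (T : OmegaOneTree α) (g : α → α) (lo : Ordinal) (X : Set α) : Prop :=
  ∀ x ∈ X, ∀ y ∈ X, (g (T.restrict x lo) = T.restrict y lo ↔ g x = y)

/-- The tuples `a` and `b` (with `a = b↾lo` componentwise) are `g`-consistent:
for all `i, j`, `g(a i) = a j` iff `g(b i) = b j`. -/
def AutoConsistentPair (g : α → α) {n : ℕ} (a b : Fin n → α) : Prop :=
  ∀ i j : Fin n, (g (a i) = a j ↔ g (b i) = b j)

/-- The indexed family of automorphisms `(g, g')` is separated on the injective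
tuple `a`: no member of the tuple satisfies a relation with itself, and each
member satisfies at most one relation `g_τ^m(a k) = a i` with earlier members. -/
def AutoSepTuple {ι : Type} (g g' : ι → α → α) {n : ℕ} (a : Fin n → α) : Prop :=
  (∀ (k : Fin n) (τ : ι), g τ (a k) ≠ a k) ∧
  ∀ (k i₁ i₂ : Fin n) (m₁ m₂ : Bool) (τ₁ τ₂ : ι), i₁ < k → i₂ < k →
    cond m₁ (g τ₁ (a k)) (g' τ₁ (a k)) = a i₁ →
    cond m₂ (g τ₂ (a k)) (g' τ₂ (a k)) = a i₂ →
    i₁ = i₂ ∧ m₁ = m₂ ∧ τ₁ = τ₂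

/-- The indexed family of automorphisms `(g, g')` is separated on the finite set
`X`: some injective tuple listing the elements of `X` witnesses separation. -/
def AutoSepSet {ι : Type} (g g' : ι → α → α) (X : Set α) : Prop :=
  ∃ (n : ℕ) (a : Fin n → α), Function.Injective a ∧ Set.range a = X ∧ AutoSepTuple g g' a

/-- The indexed family of automorphisms `(g, g')` of `T↾(β+1)` is separated:
it is separated on every finite subset of the level `T_β`. -/
def AutoSeparated (T : OmegaOneTree α) (β : Ordinal) {ι : Type} (g g' : ι → α → α) : Prop :=
  ∀ X : Set α, X.Finite → (∀ x ∈ X, T.height x = β) → AutoSepSet g g' X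


/-!
Back and forth on the level `T_δ`. Each `g_τ` is approximated by finite partial maps of `T_δ`
that lie over `f_τ` and preserve the level at which two branches split. Such a map extends to a
new point `x` by copying, up to the level where `x` leaves it, the domain point that `x` follows
longest, and then branching off into a fresh successor (this is where infinite splitting is
used; normality makes that level a successor). Enumerating `ι × T_δ`, the union of a chain of
such maps is a bijection of `T_δ` for every `τ`, and it induces an automorphism of `T↾(δ+1)`
extending `f_τ`. Starting the chain with the pairs of `X` forced by `f_τ`, `τ ∈ A`, gives
consistency on `X`.

For separation, rank `T_δ` in `ω` with `X` first, in the order of a separating enumeration of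
`X↾lo`, and always take the new image point of larger rank than every point used so far. Then
each point is related to at most one point of smaller rank, and listing any finite subset of
`T_δ` by rank witnesses separation.
-/

namespace OmegaOneTree

variable (T : OmegaOneTree α) {x y z : α} {β γ δ : Ordinal}

theorem restrict_self (h : T.height x = β) : T.restrict x β = x :=
  T.restrict_eq le_rfl h

theorem restrict_of_le (h : x ≤ y) : T.restrict y (T.height x) = x :=
  T.restrict_eq h rfl

theorem height_le_height (h : x ≤ y) : T.height x ≤ T.height y :=
  h.lt_or_eq.elim (fun h => (T.height_strictMono h).le) fun h => h ▸ le_rfl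

theorem restrict_restrict (hγβ : γ ≤ β) (hβ : β ≤ T.height x) :
    T.restrict (T.restrict x β) γ = T.restrict x γ := by
  have hγ : γ ≤ T.height (T.restrict x β) := (T.height_restrict x hβ).symm ▸ hγβ
  exact (T.restrict_eq ((T.restrict_le _ hγ).trans (T.restrict_le x hβ))
    (T.height_restrict _ hγ)).symm

theorem restrict_lt_restrict (hβγ : β < γ) (hγ : γ ≤ T.height x) :
    T.restrict x β < T.restrict x γ := by
  have hle : β ≤ T.height (T.restrict x γ) := (T.height_restrict x hγ).symm ▸ hβγ.le
  rw [← T.restrict_restrict hβγ.le hγ]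
  refine lt_of_le_of_ne (T.restrict_le _ hle) fun h => hβγ.ne ?_
  rw [← T.height_restrict _ hle, h, T.height_restrict x hγ]

theorem restrict_eq_restrict_of_le (hγβ : γ ≤ β) (hx : β ≤ T.height x) (hy : β ≤ T.height y)
    (h : T.restrict x β = T.restrict y β) : T.restrict x γ = T.restrict y γ := by
  rw [← T.restrict_restrict hγβ hx, h, T.restrict_restrict hγβ hy]

theorem lt_restrict_iff (hβ : β ≤ T.height x) :
    z < T.restrict x β ↔ T.height z < β ∧ T.restrict x (T.height z) = z := by
  constructor
  · intro h
    exact ⟨T.height_restrict x hβ ▸ T.height_strictMono h,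
      T.restrict_eq (h.le.trans (T.restrict_le x hβ)) rfl⟩
  · rintro ⟨hz, hxz⟩
    rw [← hxz]
    exact T.restrict_lt_restrict hz hβ

theorem restrict_zero (x y : α) : T.restrict x 0 = T.restrict y 0 := by
  obtain ⟨r, hr, hle⟩ := T.root_exists
  rw [T.restrict_eq (hle x) hr, T.restrict_eq (hle y) hr]

theorem restrict_eq_of_forall_lt (hβ : Order.IsSuccLimit β) (hx : β ≤ T.height x)
    (hy : β ≤ T.height y) (h : ∀ γ < β, T.restrict x γ = T.restrict y γ) :
    T.restrict x β = T.restrict y β := by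
  refine T.limit_eq ((T.height_restrict x hx).trans (T.height_restrict y hy).symm)
    ((T.height_restrict x hx).symm ▸ hβ) fun z => ?_
  rw [T.lt_restrict_iff hx, T.lt_restrict_iff hy]
  exact and_congr_right fun hz => by rw [h _ hz]

theorem exists_le_height_eq (hx : T.height x ≤ δ) (hδ : δ < omega1) :
    ∃ y, x ≤ y ∧ T.height y = δ := by
  rcases hx.lt_or_eq with hx | hx
  · obtain ⟨y, hxy, hy⟩ := T.exists_above x hx hδ
    exact ⟨y, hxy.le, hy⟩
  · exact ⟨x, le_rfl, hx⟩

def splitLevel (x y : α) : Ordinal := sInf {β | T.restrict x β ≠ T.restrict y β}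

theorem restrict_eq_of_lt_splitLevel (h : β < T.splitLevel x y) :
    T.restrict x β = T.restrict y β :=
  not_not.1 fun hne => (csInf_le' hne).not_gt h

section Distinct

variable {T} (hx : T.height x = δ) (hy : T.height y = δ) (hne : x ≠ y)
include hx hy hne

theorem restrict_splitLevel_ne :
    T.restrict x (T.splitLevel x y) ≠ T.restrict y (T.splitLevel x y) :=
  csInf_mem (s := {β | T.restrict x β ≠ T.restrict y β})
    ⟨δ, (by rwa [T.restrict_self hx, T.restrict_self hy] : T.restrict x δ ≠ T.restrict y δ)⟩

theorem splitLevel_le : T.splitLevel x y ≤ δ :=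
  csInf_le' (by rwa [T.restrict_self hx, T.restrict_self hy] : T.restrict x δ ≠ T.restrict y δ)

theorem restrict_ne_of_splitLevel_le (hsβ : T.splitLevel x y ≤ β) (hβ : β ≤ δ) :
    T.restrict x β ≠ T.restrict y β := fun h =>
  restrict_splitLevel_ne hx hy hne
    (T.restrict_eq_restrict_of_le hsβ (hx ▸ hβ) (hy ▸ hβ) h)

theorem exists_splitLevel_eq_add_one : ∃ γ, T.splitLevel x y = γ + 1 := by
  have hs := splitLevel_le hx hy hne
  rcases Ordinal.zero_or_succ_or_isSuccLimit (T.splitLevel x y) with h0 | ⟨γ, hγ⟩ | hlim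
  · exact absurd (T.restrict_zero x y) (h0 ▸ restrict_splitLevel_ne hx hy hne)
  · exact ⟨γ, by rw [← hγ, Order.succ_eq_add_one]⟩
  · exact absurd (T.restrict_eq_of_forall_lt hlim (hx ▸ hs) (hy ▸ hs)
      fun γ hγ => T.restrict_eq_of_lt_splitLevel hγ) (restrict_splitLevel_ne hx hy hne)

end Distinct

end OmegaOneTree

namespace IsTreeAuto

variable {T : OmegaOneTree α} {lo β : Ordinal} {f f' : α → α} {x x' y y' : α}

theorem symm (hf : IsTreeAuto T lo f f') : IsTreeAuto T lo f' f :=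
  ⟨hf.2.1, hf.1, hf.2.2.2.1, hf.2.2.1, hf.2.2.2.2.2, hf.2.2.2.2.1⟩

theorem restrict_comm (hf : IsTreeAuto T lo f f') (hx : T.height x ≤ lo)
    (hβ : β ≤ T.height x) : f (T.restrict x β) = T.restrict (f x) β := by
  have hht : T.height (f (T.restrict x β)) = β := by
    rw [hf.1 _ ((T.height_restrict x hβ).trans_le (hβ.trans hx)), T.height_restrict x hβ]
  refine (T.restrict_eq ?_ hht).symm
  rcases (T.restrict_le x hβ).lt_or_eq with hlt | heq
  · exact (hf.2.2.2.2.1 _ _ hx hlt).le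
  · rw [heq]

theorem restrict_eq_restrict_iff (hf : IsTreeAuto T lo f f') (hβ : β ≤ lo)
    (hx : lo ≤ T.height x) (hx' : lo ≤ T.height x') (hy : lo ≤ T.height y)
    (hy' : lo ≤ T.height y') (hxy : f (T.restrict x lo) = T.restrict y lo)
    (hxy' : f (T.restrict x' lo) = T.restrict y' lo) :
    T.restrict x β = T.restrict x' β ↔ T.restrict y β = T.restrict y' β := by
  have restrict_map : ∀ {x y : α}, lo ≤ T.height x → lo ≤ T.height y →
      f (T.restrict x lo) = T.restrict y lo → T.restrict y β = f (T.restrict x β) := by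
    intro x y hx hy hxy
    have hlo := T.height_restrict x hx
    rw [← T.restrict_restrict hβ hy, ← hxy, ← hf.restrict_comm hlo.le (hβ.trans hlo.ge),
      T.restrict_restrict hβ hx]
  have hle : ∀ {x : α}, lo ≤ T.height x → T.height (T.restrict x β) ≤ lo := fun hx =>
    (T.height_restrict _ (hβ.trans hx)).trans_le hβ
  rw [restrict_map hx hy hxy, restrict_map hx' hy' hxy']
  refine ⟨congrArg f, fun h => ?_⟩
  rw [← hf.2.2.1 _ (hle hx), h, hf.2.2.1 _ (hle hx')]

end IsTreeAuto

namespace OmegaOneTree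

/-- Finite approximations, on the level `T_δ`, of an automorphism of `T↾(δ+1)` extending `f`. -/
structure Coherent (T : OmegaOneTree α) (lo δ : Ordinal) (f : α → α) (p : Set (α × α)) :
    Prop where
  height_fst : ∀ q ∈ p, T.height q.1 = δ
  height_snd : ∀ q ∈ p, T.height q.2 = δ
  map_restrict : ∀ q ∈ p, f (T.restrict q.1 lo) = T.restrict q.2 lo
  restrict_eq_iff : ∀ q ∈ p, ∀ q' ∈ p, ∀ β ≤ δ,
    (T.restrict q.1 β = T.restrict q'.1 β ↔ T.restrict q.2 β = T.restrict q'.2 β)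

namespace Coherent

variable {T : OmegaOneTree α} {lo δ : Ordinal} {f f' : α → α} {p : Set (α × α)} {x x' y y' : α}

theorem swap (hp : T.Coherent lo δ f p) (hf : IsTreeAuto T lo f f') (hloδ : lo ≤ δ) :
    T.Coherent lo δ f' (Prod.swap ⁻¹' p) where
  height_fst q hq := hp.height_snd _ hq
  height_snd q hq := hp.height_fst _ hq
  map_restrict q hq := by
    have hlo : T.height (T.restrict q.2 lo) = lo :=
      T.height_restrict _ (hloδ.trans (hp.height_fst _ hq).ge)
    rw [← hf.2.2.1 _ hlo.le]
    exact congrArg f' (hp.map_restrict _ hq).symm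
  restrict_eq_iff q hq q' hq' β hβ := (hp.restrict_eq_iff _ hq _ hq' β hβ).symm

theorem right_unique (hp : T.Coherent lo δ f p) (h : (x, y) ∈ p) (h' : (x, y') ∈ p) :
    y = y' := by
  have := (hp.restrict_eq_iff _ h _ h' δ le_rfl).1 rfl
  rwa [T.restrict_self (hp.height_snd _ h), T.restrict_self (hp.height_snd _ h')] at this

theorem left_unique (hp : T.Coherent lo δ f p) (h : (x, y) ∈ p) (h' : (x', y) ∈ p) :
    x = x' := by
  have := (hp.restrict_eq_iff _ h _ h' δ le_rfl).2 rfl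
  rwa [T.restrict_self (hp.height_fst _ h), T.restrict_self (hp.height_fst _ h')] at this

protected theorem insert (hp : T.Coherent lo δ f p) (hx : T.height x = δ) (hy : T.height y = δ)
    (hxy : f (T.restrict x lo) = T.restrict y lo)
    (h : ∀ q ∈ p, ∀ β ≤ δ,
      (T.restrict x β = T.restrict q.1 β ↔ T.restrict y β = T.restrict q.2 β)) :
    T.Coherent lo δ f (insert (x, y) p) where
  height_fst := by rintro q (rfl | hq); exacts [hx, hp.height_fst q hq]
  height_snd := by rintro q (rfl | hq); exacts [hy, hp.height_snd q hq]
  map_restrict := by rintro q (rfl | hq); exacts [hxy, hp.map_restrict q hq]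
  restrict_eq_iff := by
    rintro q (rfl | hq) q' (rfl | hq') β hβ
    · exact iff_of_true rfl rfl
    · exact h q' hq' β hβ
    · exact eq_comm.trans ((h q hq β hβ).trans eq_comm)
    · exact hp.restrict_eq_iff q hq q' hq' β hβ

theorem iUnion {p : ℕ → Set (α × α)} (hmono : Monotone p) (h : ∀ n, T.Coherent lo δ f (p n)) :
    T.Coherent lo δ f (⋃ n, p n) where
  height_fst q hq := by
    obtain ⟨n, hn⟩ := Set.mem_iUnion.1 hq
    exact (h n).height_fst q hn
  height_snd q hq := by
    obtain ⟨n, hn⟩ := Set.mem_iUnion.1 hq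
    exact (h n).height_snd q hn
  map_restrict q hq := by
    obtain ⟨n, hn⟩ := Set.mem_iUnion.1 hq
    exact (h n).map_restrict q hn
  restrict_eq_iff q hq q' hq' := by
    obtain ⟨n, hn⟩ := Set.mem_iUnion.1 hq
    obtain ⟨n', hn'⟩ := Set.mem_iUnion.1 hq'
    exact (h (max n n')).restrict_eq_iff q (hmono (le_max_left n n') hn)
      q' (hmono (le_max_right n n') hn')

end Coherent

section Extension

variable {T : OmegaOneTree α} {lo δ γ : Ordinal} {f f' : α → α} {p : Set (α × α)} {x u : α}

theorem exists_height_eq_restrict_ne (hu : T.height u = γ) (hγδ : γ < δ) (hδ : δ < omega1)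
    {F : Set α} (hF : F.Finite) :
    ∃ y, T.height y = δ ∧ T.restrict y γ = u ∧
      ∀ t ∈ F, T.restrict y (γ + 1) ≠ T.restrict t (γ + 1) := by
  obtain ⟨v, ⟨huv, hv⟩, hvF⟩ :=
    ((T.splitting u).sdiff (hF.image fun t => T.restrict t (γ + 1))).nonempty
  rw [hu] at hv
  obtain ⟨y, hvy, hy⟩ := T.exists_le_height_eq (hv ▸ Order.add_one_le_of_lt hγδ) hδ
  have hyv : T.restrict y (γ + 1) = v := T.restrict_eq hvy hv
  refine ⟨y, hy, ?_, fun t ht h => hvF ⟨t, ht, h.symm.trans hyv⟩⟩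
  rw [← T.restrict_restrict le_self_add (hy ▸ Order.add_one_le_of_lt hγδ), hyv]
  exact T.restrict_eq huv.le hu

namespace Coherent

/-- The image of `x` is any node above `u` that branches off, right above `u`, from the range
of `p` and from `F`. -/
theorem exists_insert_of_node (hp : T.Coherent lo δ f p) (hpfin : p.Finite)
    (hδ : δ < omega1) (hx : T.height x = δ) {F : Set α} (hF : F.Finite)
    (hlo : lo ≤ γ) (hγδ : γ < δ) (hu : T.height u = γ)
    (hu_lo : f (T.restrict x lo) = T.restrict u lo)
    (hu_eq : ∀ q ∈ p, ∀ β ≤ γ,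
      (T.restrict x β = T.restrict q.1 β ↔ T.restrict u β = T.restrict q.2 β))
    (hsplit : ∀ q ∈ p, T.restrict x (γ + 1) ≠ T.restrict q.1 (γ + 1)) :
    ∃ y ∉ F, T.Coherent lo δ f (insert (x, y) p) := by
  obtain ⟨y, hy, hyu, hyF⟩ :=
    exists_height_eq_restrict_ne hu hγδ hδ (hF.union (hpfin.image Prod.snd))
  have hyβ : ∀ β ≤ γ, T.restrict y β = T.restrict u β := fun β hβ => by
    rw [← hyu, T.restrict_restrict hβ (hy ▸ hγδ.le)]
  refine ⟨y, fun h => hyF y (Or.inl h) rfl,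
    hp.insert hx hy (by rw [hu_lo, hyβ lo hlo]) fun q hq β hβ => ?_⟩
  rcases le_or_gt β γ with hβγ | hγβ
  · rw [hyβ β hβγ]
    exact hu_eq q hq β hβγ
  · have hγ1 := Order.add_one_le_of_lt hγβ
    refine iff_of_false (fun h => hsplit q hq ?_) (fun h => hyF q.2 (Or.inr ⟨q, hq, rfl⟩) ?_)
    · exact T.restrict_eq_restrict_of_le hγ1 (hx ▸ hβ) ((hp.height_fst q hq).symm ▸ hβ) h
    · exact T.restrict_eq_restrict_of_le hγ1 (hy ▸ hβ) ((hp.height_snd q hq).symm ▸ hβ) h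

/-- The node `u` is taken where `x` leaves the domain point it follows longest, or at `lo` if
`x` has left them all by then. -/
theorem exists_insert (hp : T.Coherent lo δ f p) (hpfin : p.Finite) (hf : IsTreeAuto T lo f f')
    (hloδ : lo < δ) (hδ : δ < omega1) (hx : T.height x = δ) (hxp : ∀ q ∈ p, q.1 ≠ x)
    {F : Set α} (hF : F.Finite) : ∃ y ∉ F, T.Coherent lo δ f (insert (x, y) p) := by
  have hne : ∀ q ∈ p, x ≠ q.1 := fun q hq h => hxp q hq h.symm
  by_cases hsmall : ∀ q ∈ p, T.splitLevel x q.1 ≤ lo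
  · have hxlo : T.height (T.restrict x lo) = lo := T.height_restrict x (hx ▸ hloδ.le)
    have hfx : T.height (f (T.restrict x lo)) = lo := (hf.1 _ hxlo.le).trans hxlo
    refine hp.exists_insert_of_node hpfin hδ hx hF le_rfl hloδ hfx (T.restrict_self hfx).symm
      (fun q hq β hβ => hf.restrict_eq_restrict_iff hβ (hx ▸ hloδ.le)
        ((hp.height_fst q hq).symm ▸ hloδ.le) hfx.ge ((hp.height_snd q hq).symm ▸ hloδ.le)
        (T.restrict_self hfx).symm (hp.map_restrict q hq))
      fun q hq => restrict_ne_of_splitLevel_le hx (hp.height_fst q hq) (hne q hq)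
        ((hsmall q hq).trans le_self_add) (Order.add_one_le_of_lt hloδ)
  · push Not at hsmall
    obtain ⟨q₁, hq₁, hlo₁⟩ := hsmall
    obtain ⟨q₀, hq₀, hmax⟩ := Finset.exists_max_image hpfin.toFinset
      (fun q => T.splitLevel x q.1) ⟨q₁, hpfin.mem_toFinset.2 hq₁⟩
    rw [Set.Finite.mem_toFinset] at hq₀
    replace hmax : ∀ q ∈ p, T.splitLevel x q.1 ≤ T.splitLevel x q₀.1 :=
      fun q hq => hmax q (hpfin.mem_toFinset.2 hq)
    obtain ⟨γ, hγ⟩ := exists_splitLevel_eq_add_one hx (hp.height_fst q₀ hq₀) (hne q₀ hq₀)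
    have hlo : lo ≤ γ := Order.lt_add_one_iff.1 (hγ ▸ hlo₁.trans_le (hmax q₁ hq₁))
    have hγδ : γ + 1 ≤ δ := hγ ▸ splitLevel_le hx (hp.height_fst q₀ hq₀) (hne q₀ hq₀)
    have hγq : γ ≤ T.height q₀.2 := (hp.height_snd q₀ hq₀).symm ▸ le_self_add.trans hγδ
    have hagree : ∀ β ≤ γ, T.restrict x β = T.restrict q₀.1 β := fun β hβ =>
      T.restrict_eq_of_lt_splitLevel (hγ ▸ Order.lt_add_one_iff.2 hβ)
    refine hp.exists_insert_of_node (u := T.restrict q₀.2 γ) hpfin hδ hx hF hlo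
      (Order.add_one_le_iff.1 hγδ) (T.height_restrict _ hγq) ?_ (fun q hq β hβ => ?_)
      fun q hq => restrict_ne_of_splitLevel_le hx (hp.height_fst q hq) (hne q hq)
        (hγ ▸ hmax q hq) hγδ
    · rw [T.restrict_restrict hlo hγq, ← hp.map_restrict q₀ hq₀, hagree lo hlo]
    · rw [hagree β hβ, T.restrict_restrict hβ hγq]
      exact hp.restrict_eq_iff q₀ hq₀ q hq β (hβ.trans (le_self_add.trans hγδ))

end Coherent

end Extension

section Lift

variable (T : OmegaOneTree α) (δ : Ordinal)

open Classical in
def nodeAbove (z : α) : α :=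
  if h : ∃ y, z ≤ y ∧ T.height y = δ then h.choose else z

def levelLift (σ : α → α) (z : α) : α :=
  T.restrict (σ (T.nodeAbove δ z)) (T.height z)

variable {T δ}

theorem le_nodeAbove {z : α} (hz : T.height z ≤ δ) (hδ : δ < omega1) :
    z ≤ T.nodeAbove δ z ∧ T.height (T.nodeAbove δ z) = δ := by
  have h := T.exists_le_height_eq hz hδ
  rw [nodeAbove, dif_pos h]
  exact h.choose_spec

section LevelLift

variable {lo : Ordinal} {f : α → α} {U : Set (α × α)} {σ : α → α} {x y z s : α}
  (hU : T.Coherent lo δ f U) (hσ : ∀ s, T.height s = δ → (s, σ s) ∈ U) (hδ : δ < omega1)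
include hU hσ hδ

theorem levelLift_eq (hzs : z ≤ s) (hs : T.height s = δ) :
    T.levelLift δ σ z = T.restrict (σ s) (T.height z) := by
  have hz : T.height z ≤ δ := hs ▸ T.height_le_height hzs
  obtain ⟨hzt, ht⟩ := le_nodeAbove hz hδ
  exact (hU.restrict_eq_iff _ (hσ _ ht) _ (hσ s hs) _ hz).1
    (by rw [T.restrict_of_le hzt, T.restrict_of_le hzs])

theorem height_levelLift (hz : T.height z ≤ δ) : T.height (T.levelLift δ σ z) = T.height z := by
  obtain ⟨hzt, ht⟩ := le_nodeAbove hz hδ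
  rw [levelLift_eq hU hσ hδ hzt ht]
  exact T.height_restrict _ ((hU.height_snd _ (hσ _ ht)).symm ▸ hz)

theorem levelLift_of_height_eq (hs : T.height s = δ) : T.levelLift δ σ s = σ s := by
  rw [levelLift_eq hU hσ hδ le_rfl hs, hs]
  exact T.restrict_self (hU.height_snd _ (hσ s hs))

theorem levelLift_lt_levelLift (hy : T.height y ≤ δ) (hxy : x < y) :
    T.levelLift δ σ x < T.levelLift δ σ y := by
  obtain ⟨hyt, ht⟩ := le_nodeAbove hy hδ
  rw [levelLift_eq hU hσ hδ (hxy.le.trans hyt) ht, levelLift_eq hU hσ hδ hyt ht]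
  exact T.restrict_lt_restrict (T.height_strictMono hxy)
    ((hU.height_snd _ (hσ _ ht)).symm ▸ hy)

theorem levelLift_levelLift {lo' : Ordinal} {f' : α → α} {U' : Set (α × α)} {σ' : α → α}
    (hU' : T.Coherent lo' δ f' U') (hσ' : ∀ s, T.height s = δ → (s, σ' s) ∈ U')
    (hinv : ∀ s, T.height s = δ → σ' (σ s) = s) (hz : T.height z ≤ δ) :
    T.levelLift δ σ' (T.levelLift δ σ z) = z := by
  obtain ⟨hzt, ht⟩ := le_nodeAbove hz hδ
  have hσt := hU.height_snd _ (hσ _ ht)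
  have hzσ : T.height z ≤ T.height (σ (T.nodeAbove δ z)) := hσt.symm ▸ hz
  rw [levelLift_eq hU' hσ' hδ (s := σ (T.nodeAbove δ z)) ?_ hσt, hinv _ ht,
    height_levelLift hU hσ hδ hz, T.restrict_of_le hzt]
  rw [levelLift_eq hU hσ hδ hzt ht]
  exact T.restrict_le _ hzσ

theorem levelLift_of_height_le {f' : α → α} (hf : IsTreeAuto T lo f f') (hloδ : lo ≤ δ)
    (hz : T.height z ≤ lo) : T.levelLift δ σ z = f z := by
  obtain ⟨hzt, ht⟩ := le_nodeAbove (hz.trans hloδ) hδ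
  have hσt := hU.height_snd _ (hσ _ ht)
  have hlo := T.height_restrict (T.nodeAbove δ z) (ht.symm ▸ hloδ)
  rw [levelLift_eq hU hσ hδ hzt ht, ← T.restrict_restrict hz (hσt.symm ▸ hloδ),
    ← hU.map_restrict _ (hσ _ ht), ← hf.restrict_comm hlo.le (hlo.symm ▸ hz),
    T.restrict_restrict hz (ht.symm ▸ hloδ), T.restrict_of_le hzt]

end LevelLift

theorem Coherent.exists_treeAuto {lo : Ordinal} {f f' : α → α} {U : Set (α × α)}
    (hU : T.Coherent lo δ f U) (hf : IsTreeAuto T lo f f') (hloδ : lo ≤ δ) (hδ : δ < omega1)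
    (hdom : ∀ x, T.height x = δ → ∃ y, (x, y) ∈ U)
    (hran : ∀ y, T.height y = δ → ∃ x, (x, y) ∈ U) :
    ∃ g g', IsTreeAuto T δ g g' ∧ AutoExtends T lo f f' g g' ∧
      ∀ s, T.height s = δ → (s, g s) ∈ U ∧ (g' s, s) ∈ U := by
  have hU' := hU.swap hf hloδ
  have select : ∀ {V : Set (α × α)}, (∀ x, T.height x = δ → ∃ y, (x, y) ∈ V) →
      ∃ σ : α → α, ∀ s, T.height s = δ → (s, σ s) ∈ V := fun {V} h => by
    choose σ hσ using fun s => if hs : T.height s = δ then (h s hs).imp fun _ hy _ => hy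
      else ⟨s, fun h => absurd h hs⟩
    exact ⟨σ, hσ⟩
  obtain ⟨σ, hσ⟩ := select hdom
  obtain ⟨σ', hσ'⟩ := select (V := Prod.swap ⁻¹' U) fun y hy => (hran y hy).imp fun _ h => h
  have hinv : ∀ s, T.height s = δ → σ' (σ s) = s := fun s hs =>
    hU.left_unique (hσ' _ (hU.height_snd _ (hσ s hs))) (hσ s hs)
  have hinv' : ∀ s, T.height s = δ → σ (σ' s) = s := fun s hs =>
    hU.right_unique (hσ _ (hU.height_fst _ (hσ' s hs))) (hσ' s hs)
  refine ⟨T.levelLift δ σ, T.levelLift δ σ',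
    ⟨fun z => height_levelLift hU hσ hδ, fun z => height_levelLift hU' hσ' hδ,
      fun z => levelLift_levelLift hU hσ hδ hU' hσ' hinv,
      fun z => levelLift_levelLift hU' hσ' hδ hU hσ hinv',
      fun x y => levelLift_lt_levelLift hU hσ hδ, fun x y => levelLift_lt_levelLift hU' hσ' hδ⟩,
    ⟨fun z => levelLift_of_height_le hU hσ hδ hf hloδ,
      fun z => levelLift_of_height_le hU' hσ' hδ hf.symm hloδ⟩, fun s hs => ?_⟩
  rw [levelLift_of_height_eq hU hσ hδ hs, levelLift_of_height_eq hU' hσ' hδ hs]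
  exact ⟨hσ s hs, hσ' s hs⟩

end Lift

end OmegaOneTree

/-- `cond m (a, b) (b, a) ∈ P τ` encodes `σ_τ^{±1}(a) = b`, as in `AutoSepTuple`. -/
def RankSeparated {ι : Type} (r : α → ℕ) (P : ι → Set (α × α)) : Prop :=
  (∀ τ a, (a, a) ∉ P τ) ∧
  ∀ (a b₁ b₂ : α) (m₁ m₂ : Bool) (τ₁ τ₂ : ι), r b₁ < r a → r b₂ < r a →
    cond m₁ (a, b₁) (b₁, a) ∈ P τ₁ → cond m₂ (a, b₂) (b₂, a) ∈ P τ₂ →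
    b₁ = b₂ ∧ m₁ = m₂ ∧ τ₁ = τ₂

section RankSeparation

omit [PartialOrder α]

theorem mem_update_insert {ι : Type} [DecidableEq ι] {P : ι → Set (α × α)} {τ₀ τ : ι}
    {q q' : α × α} :
    q' ∈ Function.update P τ₀ (insert q (P τ₀)) τ ↔ (τ = τ₀ ∧ q' = q) ∨ q' ∈ P τ := by
  by_cases h : τ = τ₀
  · subst h; simp
  · simp [h]

namespace RankSeparated

variable {ι : Type} {r : α → ℕ} {P : ι → Set (α × α)}

theorem swap (hP : RankSeparated r P) : RankSeparated r fun τ => Prod.swap ⁻¹' P τ := by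
  have hswap : ∀ (m : Bool) (a b : α), (cond m (a, b) (b, a)).swap = cond (!m) (a, b) (b, a) := by
    intro m a b; cases m <;> rfl
  refine ⟨fun τ a => hP.1 τ a, fun a b₁ b₂ m₁ m₂ τ₁ τ₂ hb₁ hb₂ h₁ h₂ => ?_⟩
  rw [Set.mem_preimage, hswap] at h₁ h₂
  obtain ⟨hb, hm, hτ⟩ := hP.2 a b₁ b₂ _ _ τ₁ τ₂ hb₁ hb₂ h₁ h₂
  exact ⟨hb, Bool.not_inj hm, hτ⟩

theorem update_insert [DecidableEq ι] (hP : RankSeparated r P) {c d : α} {q : α × α} (τ₀ : ι)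
    (hc : ∀ τ, ∀ q ∈ P τ, r q.1 < r c ∧ r q.2 < r c) (hd : r d < r c)
    (hq : q = (d, c) ∨ q = (c, d)) :
    RankSeparated r (Function.update P τ₀ (insert q (P τ₀))) := by
  have hold : ∀ {m : Bool} {a b : α} {τ}, cond m (a, b) (b, a) ∈ P τ → r a < r c := by
    intro m a b τ h
    cases m
    · exact (hc τ _ h).2
    · exact (hc τ _ h).1
  have hnew : ∀ {m : Bool} {a b : α}, r b < r a → cond m (a, b) (b, a) = q → a = c := by
    intro m a b hba h
    cases m <;> rcases hq with rfl | rfl <;> simp only [cond, Prod.mk.injEq] at h <;>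
      first | exact h.1 | exact h.2 | (obtain ⟨rfl, rfl⟩ := h; omega)
  have hinj : ∀ {m₁ m₂ : Bool} {a b₁ b₂ : α}, r b₁ < r a → r b₂ < r a →
      cond m₁ (a, b₁) (b₁, a) = cond m₂ (a, b₂) (b₂, a) → b₁ = b₂ ∧ m₁ = m₂ := by
    intro m₁ m₂ a b₁ b₂ h₁ h₂ h
    cases m₁ <;> cases m₂ <;> simp only [cond, Prod.mk.injEq] at h <;>
      first | exact ⟨h.1, rfl⟩ | exact ⟨h.2, rfl⟩ | (obtain ⟨rfl, -⟩ := h; omega)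
  refine ⟨fun τ a h => ?_, fun a b₁ b₂ m₁ m₂ τ₁ τ₂ hb₁ hb₂ h₁ h₂ => ?_⟩
  · rcases mem_update_insert.1 h with ⟨-, rfl⟩ | h
    · rcases hq with h | h <;> obtain ⟨rfl, rfl⟩ := Prod.mk.inj h <;> omega
    · exact hP.1 τ a h
  rw [mem_update_insert] at h₁ h₂
  rcases h₁ with ⟨rfl, h₁⟩ | h₁ <;> rcases h₂ with ⟨rfl, h₂⟩ | h₂
  · obtain ⟨hb, hm⟩ := hinj hb₁ hb₂ (h₁.trans h₂.symm)
    exact ⟨hb, hm, rfl⟩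
  · exact absurd (congrArg r (hnew hb₁ h₁)) (hold h₂).ne
  · exact absurd (congrArg r (hnew hb₂ h₂)) (hold h₁).ne
  · exact hP.2 a b₁ b₂ m₁ m₂ τ₁ τ₂ hb₁ hb₂ h₁ h₂

theorem iUnion {P : ℕ → ι → Set (α × α)} (hmono : Monotone P)
    (h : ∀ n, RankSeparated r (P n)) : RankSeparated r fun τ => ⋃ n, P n τ := by
  refine ⟨fun τ a ha => ?_, fun a b₁ b₂ m₁ m₂ τ₁ τ₂ hb₁ hb₂ h₁ h₂ => ?_⟩
  · obtain ⟨n, hn⟩ := Set.mem_iUnion.1 ha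
    exact (h n).1 τ a hn
  · obtain ⟨n₁, hn₁⟩ := Set.mem_iUnion.1 h₁
    obtain ⟨n₂, hn₂⟩ := Set.mem_iUnion.1 h₂
    exact (h (max n₁ n₂)).2 a b₁ b₂ m₁ m₂ τ₁ τ₂ hb₁ hb₂ (hmono (le_max_left n₁ n₂) τ₁ hn₁)
      (hmono (le_max_right n₁ n₂) τ₂ hn₂)

end RankSeparated

variable {ι : Type} {g g' : ι → α → α}

theorem autoSepSet_of_rank {Y : Set α} (hY : Y.Finite) (r : α → ℕ) (hr : Set.InjOn r Y)
    (hfix : ∀ a ∈ Y, ∀ τ, g τ a ≠ a)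
    (huniq : ∀ a ∈ Y, ∀ (b₁ b₂ : α) (m₁ m₂ : Bool) (τ₁ τ₂ : ι), r b₁ < r a → r b₂ < r a →
      cond m₁ (g τ₁ a) (g' τ₁ a) = b₁ → cond m₂ (g τ₂ a) (g' τ₂ a) = b₂ →
      b₁ = b₂ ∧ m₁ = m₂ ∧ τ₁ = τ₂) :
    AutoSepSet g g' Y := by
  classical
  set s : Finset ℕ := hY.toFinset.image r
  set e := s.orderEmbOfFin rfl
  have hmem : ∀ k, ∃ a ∈ Y, r a = e k := fun k => by
    obtain ⟨a, ha, h⟩ := Finset.mem_image.1 (s.orderEmbOfFin_mem rfl k)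
    exact ⟨a, hY.mem_toFinset.1 ha, h⟩
  choose a haY har using hmem
  have hinj : Function.Injective a := fun i j h => e.injective (by rw [← har, ← har, h])
  refine ⟨s.card, a, hinj, ?_, fun k τ => hfix _ (haY k) τ, ?_⟩
  · refine (Set.range_subset_iff.2 haY).antisymm fun y hy => ?_
    have : r y ∈ Set.range e := by
      rw [Finset.range_orderEmbOfFin, Finset.coe_image]
      exact ⟨y, hY.mem_toFinset.2 hy, rfl⟩
    obtain ⟨k, hk⟩ := this
    exact ⟨k, hr (haY k) hy ((har k).trans hk)⟩
  · intro k i₁ i₂ m₁ m₂ τ₁ τ₂ hi₁ hi₂ h₁ h₂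
    have hrank : ∀ {i}, i < k → r (a i) < r (a k) := fun hi => by
      rw [har, har]
      exact e.strictMono hi
    obtain ⟨hb, hm, hτ⟩ := huniq _ (haY k) _ _ m₁ m₂ τ₁ τ₂ (hrank hi₁) (hrank hi₂) h₁ h₂
    exact ⟨hinj hb, hm, hτ⟩

end RankSeparation

theorem RankSeparated.autoSeparated {T : OmegaOneTree α} {δ : Ordinal} {ι : Type} {r : α → ℕ}
    {U : ι → Set (α × α)} {g g' : ι → α → α} (hU : RankSeparated r U)
    (hr : Set.InjOn r {x | T.height x = δ})
    (hg : ∀ τ s, T.height s = δ → (s, g τ s) ∈ U τ ∧ (g' τ s, s) ∈ U τ) :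
    AutoSeparated T δ g g' := by
  intro Y hYfin hY
  refine autoSepSet_of_rank hYfin r (hr.mono fun x hx => hY x hx)
    (fun a ha τ h => hU.1 τ a (by simpa only [h] using (hg τ a (hY a ha)).1)) ?_
  intro a ha b₁ b₂ m₁ m₂ τ₁ τ₂ hb₁ hb₂ h₁ h₂
  have edge : ∀ {m τ b}, cond m (g τ a) (g' τ a) = b → cond m (a, b) (b, a) ∈ U τ := by
    rintro m τ b rfl
    cases m
    exacts [(hg τ a (hY a ha)).2, (hg τ a (hY a ha)).1]
  exact hU.2 a b₁ b₂ m₁ m₂ τ₁ τ₂ hb₁ hb₂ (edge h₁) (edge h₂)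

namespace OmegaOneTree

theorem finite_setOf_rank_le {T : OmegaOneTree α} {δ : Ordinal} {r : α → ℕ}
    (hr : Set.InjOn r {x | T.height x = δ}) (N : ℕ) :
    {x | T.height x = δ ∧ r x ≤ N}.Finite :=
  ((Set.finite_Iic N).subset (by rintro _ ⟨x, hx, rfl⟩; exact hx.2)).of_finite_image
    (hr.mono fun _ hx => hx.1)

structure IsStage (T : OmegaOneTree α) (lo δ : Ordinal) {ι : Type} (f : ι → α → α)
    (r : α → ℕ) (P : ι → Set (α × α)) : Prop where
  coherent : ∀ τ, T.Coherent lo δ (f τ) (P τ)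
  bounded : ∃ N, ∀ τ, ∀ q ∈ P τ, r q.1 ≤ N ∧ r q.2 ≤ N

namespace IsStage

variable {T : OmegaOneTree α} {lo δ : Ordinal} {ι : Type} {f f' : ι → α → α} {r : α → ℕ}
  {P : ι → Set (α × α)}

theorem swap (hP : T.IsStage lo δ f r P) (hf : ∀ τ, IsTreeAuto T lo (f τ) (f' τ))
    (hloδ : lo ≤ δ) : T.IsStage lo δ f' r fun τ => Prod.swap ⁻¹' P τ :=
  ⟨fun τ => (hP.coherent τ).swap (hf τ) hloδ,
    hP.bounded.imp fun _ h τ _ hq => (h τ _ hq).symm⟩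

theorem finite (hP : T.IsStage lo δ f r P) (hr : Set.InjOn r {x | T.height x = δ}) (τ : ι) :
    (P τ).Finite := by
  obtain ⟨N, hN⟩ := hP.bounded
  have hF := finite_setOf_rank_le hr N
  exact (hF.prod hF).subset fun q hq =>
    ⟨⟨(hP.coherent τ).height_fst q hq, (hN τ q hq).1⟩,
      ⟨(hP.coherent τ).height_snd q hq, (hN τ q hq).2⟩⟩

variable [DecidableEq ι] (hf : ∀ τ, IsTreeAuto T lo (f τ) (f' τ)) (hloδ : lo < δ)
  (hδ : δ < omega1) (hr : Set.InjOn r {x | T.height x = δ})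
include hf hloδ hδ hr

/-- The image of a new point is chosen of larger rank than all nodes met so far, which keeps the
family rank-separated. -/
theorem exists_extend_fst (hP : T.IsStage lo δ f r P) (τ₀ : ι) {x : α} (hx : T.height x = δ) :
    ∃ P', P ≤ P' ∧ T.IsStage lo δ f r P' ∧ (∃ y, (x, y) ∈ P' τ₀) ∧
      (RankSeparated r P → RankSeparated r P') := by
  by_cases hdom : ∃ y, (x, y) ∈ P τ₀
  · exact ⟨P, le_rfl, hP, hdom, id⟩
  push Not at hdom
  obtain ⟨N, hN⟩ := hP.bounded
  obtain ⟨y, hyF, hy⟩ := (hP.coherent τ₀).exists_insert (hP.finite hr τ₀) (hf τ₀) hloδ hδ hx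
    (fun q hq h => hdom q.2 (h ▸ hq)) (finite_setOf_rank_le hr (max N (r x)))
  have hry : max N (r x) < r y :=
    not_le.1 fun h => hyF ⟨hy.height_snd (x, y) (Set.mem_insert _ _), h⟩
  refine ⟨Function.update P τ₀ (insert (x, y) (P τ₀)),
    fun τ q hq => mem_update_insert.2 (Or.inr hq), ⟨fun τ => ?_, ⟨r y, fun τ q hq => ?_⟩⟩,
    ⟨y, mem_update_insert.2 (Or.inl ⟨rfl, rfl⟩)⟩,
    fun hs => hs.update_insert τ₀ (fun τ q hq => ?_) (by omega) (Or.inl rfl)⟩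
  · by_cases h : τ = τ₀
    · subst h
      simpa using hy
    · simpa [h] using hP.coherent τ
  · rcases mem_update_insert.1 hq with ⟨-, rfl⟩ | hq
    · exact ⟨by dsimp only; omega, le_rfl⟩
    · have := hN τ q hq
      omega
  · have := hN τ q hq
    omega

theorem exists_extend (hP : T.IsStage lo δ f r P) (τ₀ : ι) {s : α} (hs : T.height s = δ) :
    ∃ P', P ≤ P' ∧ T.IsStage lo δ f r P' ∧ ((∃ y, (s, y) ∈ P' τ₀) ∧ ∃ x, (x, s) ∈ P' τ₀) ∧
      (RankSeparated r P → RankSeparated r P') := by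
  obtain ⟨P₁, hle₁, hP₁, ⟨y, hy⟩, hsep₁⟩ := hP.exists_extend_fst hf hloδ hδ hr τ₀ hs
  obtain ⟨P₂, hle₂, hP₂, ⟨x, hx⟩, hsep₂⟩ := (hP₁.swap hf hloδ.le).exists_extend_fst
    (fun τ => (hf τ).symm) hloδ hδ hr τ₀ hs
  have hle : P₁ ≤ fun τ => Prod.swap ⁻¹' P₂ τ := fun τ q hq => hle₂ τ (by simpa using hq)
  exact ⟨fun τ => Prod.swap ⁻¹' P₂ τ, hle₁.trans hle, hP₂.swap (fun τ => (hf τ).symm) hloδ.le,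
    ⟨⟨y, hle τ₀ hy⟩, ⟨x, hx⟩⟩, fun hs => (hsep₂ (hsep₁ hs).swap).swap⟩

omit [DecidableEq ι]

/-- Back and forth along an enumeration of `ι × T_δ`. -/
theorem exists_limit [Countable ι] {P₀ : ι → Set (α × α)} (hP₀ : T.IsStage lo δ f r P₀) :
    ∃ U : ι → Set (α × α), P₀ ≤ U ∧ (∀ τ, T.Coherent lo δ (f τ) (U τ)) ∧
      (∀ τ s, T.height s = δ → (∃ y, (s, y) ∈ U τ) ∧ ∃ x, (x, s) ∈ U τ) ∧
      (RankSeparated r P₀ → RankSeparated r U) := by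
  classical
  have : Countable {x // T.height x = δ} := (T.level_countable δ).to_subtype
  let := Encodable.ofCountable (ι × {x // T.height x = δ})
  have hstep : ∀ (n : ℕ) (P : ι → Set (α × α)), T.IsStage lo δ f r P →
      ∃ P', P ≤ P' ∧ T.IsStage lo δ f r P' ∧ (RankSeparated r P → RankSeparated r P') ∧
        ∀ e ∈ Encodable.decode (α := ι × {x // T.height x = δ}) n,
          (∃ y, (e.2.1, y) ∈ P' e.1) ∧ ∃ x, (x, e.2.1) ∈ P' e.1 := by
    intro n P hP
    cases Encodable.decode (α := ι × {x // T.height x = δ}) n with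
    | none => exact ⟨P, le_rfl, hP, id, by simp⟩
    | some e =>
      obtain ⟨P', hle, hP', hcover, hsep⟩ := hP.exists_extend hf hloδ hδ hr e.1 e.2.2
      exact ⟨P', hle, hP', hsep, by simpa using hcover⟩
  choose! next hle hnext hsep hcover using hstep
  let seq : ℕ → ι → Set (α × α) := fun n => Nat.rec P₀ next n
  have hseq : ∀ n, T.IsStage lo δ f r (seq n) := fun n => Nat.rec hP₀ (fun n ih => hnext n _ ih) n
  have hmono : Monotone seq := monotone_nat_of_le_succ fun n => hle n _ (hseq n)
  refine ⟨fun τ => ⋃ n, seq n τ, fun τ => Set.subset_iUnion (fun n => seq n τ) 0,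
    fun τ => Coherent.iUnion (fun _ _ h => hmono h τ) fun n => (hseq n).coherent τ,
    fun τ s hs => ?_, fun h₀ => RankSeparated.iUnion hmono fun n => ?_⟩
  · set n := Encodable.encode (τ, (⟨s, hs⟩ : {x // T.height x = δ}))
    obtain ⟨⟨y, hy⟩, ⟨x, hx⟩⟩ := hcover n _ (hseq n) (τ, ⟨s, hs⟩) (Encodable.encodek _)
    exact ⟨⟨y, Set.mem_iUnion_of_mem (n + 1) hy⟩, ⟨x, Set.mem_iUnion_of_mem (n + 1) hx⟩⟩
  · induction n with
    | zero => exact h₀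
    | succ n ih => exact hsep n _ (hseq n) ih

end IsStage

def forcedPairs (T : OmegaOneTree α) (lo : Ordinal) (X : Set α) {ι : Type} (f : ι → α → α)
    (A : Set ι) (τ : ι) : Set (α × α) :=
  {q | τ ∈ A ∧ q.1 ∈ X ∧ q.2 ∈ X ∧ f τ (T.restrict q.1 lo) = T.restrict q.2 lo}

section ForcedPairs

variable {T : OmegaOneTree α} {lo δ : Ordinal} {X : Set α} {ι : Type} {f f' : ι → α → α}
  {A : Set ι} (hf : ∀ τ, IsTreeAuto T lo (f τ) (f' τ)) (hloδ : lo ≤ δ)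
  (hXlev : ∀ x ∈ X, T.height x = δ) (hXdrop : Set.InjOn (fun x => T.restrict x lo) X)
include hf hloδ hXlev hXdrop

theorem coherent_forcedPairs (τ : ι) : T.Coherent lo δ (f τ) (T.forcedPairs lo X f A τ) where
  height_fst q hq := hXlev _ hq.2.1
  height_snd q hq := hXlev _ hq.2.2.1
  map_restrict q hq := hq.2.2.2
  restrict_eq_iff := by
    rintro ⟨x, y⟩ ⟨-, hx, hy, hxy⟩ ⟨x', y'⟩ ⟨-, hx', hy', hxy'⟩ β hβ
    have hlo : ∀ {z}, z ∈ X → lo ≤ T.height z := fun hz => (hXlev _ hz).symm ▸ hloδ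
    have hauto : ∀ {β}, β ≤ lo → (T.restrict x β = T.restrict x' β ↔
        T.restrict y β = T.restrict y' β) := fun hβ =>
      (hf τ).restrict_eq_restrict_iff hβ (hlo hx) (hlo hx') (hlo hy) (hlo hy') hxy hxy'
    rcases le_total β lo with hβlo | hloβ
    · exact hauto hβlo
    have hdrop : ∀ {z z'}, z ∈ X → z' ∈ X →
        (T.restrict z β = T.restrict z' β ↔ T.restrict z lo = T.restrict z' lo) :=
      fun hz hz' => ⟨T.restrict_eq_restrict_of_le hloβ ((hXlev _ hz).symm ▸ hβ)
        ((hXlev _ hz').symm ▸ hβ), fun h => by rw [hXdrop hz hz' h]⟩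
    rw [hdrop hx hx', hdrop hy hy']
    exact hauto le_rfl

theorem isStage_forcedPairs (hXfin : X.Finite) (r : α → ℕ) :
    T.IsStage lo δ f r (T.forcedPairs lo X f A) := by
  obtain ⟨N, hN⟩ := (hXfin.image r).bddAbove
  exact ⟨coherent_forcedPairs hf hloδ hXlev hXdrop,
    ⟨N, fun τ q hq => ⟨hN ⟨_, hq.2.1, rfl⟩, hN ⟨_, hq.2.2.1, rfl⟩⟩⟩⟩

end ForcedPairs

end OmegaOneTree

section Rank

omit [PartialOrder α] in
theorem exists_injOn_nat_extend {S : Set α} (hS : S.Countable) {n : ℕ} {a : Fin n → α}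
    (ha : Function.Injective a) : ∃ r : α → ℕ, Set.InjOn r S ∧ ∀ k, r (a k) = k := by
  classical
  obtain ⟨e, he⟩ := Set.countable_iff_exists_injOn.1 hS
  have hidx : ∀ {z} (h : ∃ k, a k = z), a h.choose = z := fun h => h.choose_spec
  refine ⟨fun z => if h : ∃ k, a k = z then h.choose else n + e z, fun z hz w hw h => ?_,
    fun k => ?_⟩
  · by_cases hz' : ∃ k, a k = z <;> by_cases hw' : ∃ k, a k = w <;>
      simp only [hz', hw', dif_pos, dif_neg, not_false_eq_true] at h
    · rw [← hidx hz', ← hidx hw', Fin.ext h]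
    · have := hz'.choose.isLt; omega
    · have := hw'.choose.isLt; omega
    · exact he hz hw (by omega)
  · have h : ∃ j, a j = a k := ⟨k, rfl⟩
    simp only [h, dif_pos, ha (hidx h)]

variable {T : OmegaOneTree α} {lo δ : Ordinal} {X : Set α} {ι : Type} {f f' : ι → α → α}
  {A : Set ι} (hf : ∀ τ, IsTreeAuto T lo (f τ) (f' τ)) (hloδ : lo ≤ δ)
  (hXlev : ∀ x ∈ X, T.height x = δ)
include hf hloδ hXlev

theorem rankSeparated_forcedPairs {n : ℕ} {b : Fin n → α}
    (hb : AutoSepTuple (fun τ : ↥A => f τ.1) (fun τ : ↥A => f' τ.1) b) {a : Fin n → α}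
    (haX : ∀ k, a k ∈ X) (hXa : ∀ x ∈ X, ∃ k, a k = x) (hab : ∀ k, T.restrict (a k) lo = b k)
    {r : α → ℕ} (hra : ∀ k, r (a k) = k) : RankSeparated r (T.forcedPairs lo X f A) := by
  refine ⟨?_, fun x y₁ y₂ m₁ m₂ τ₁ τ₂ hy₁ hy₂ h₁ h₂ => ?_⟩
  · rintro τ x ⟨hτ, hx, -, hxx⟩
    obtain ⟨k, rfl⟩ := hXa x hx
    exact hb.1 k ⟨τ, hτ⟩ (by rw [← hab k]; exact hxx)
  have hmem : ∀ {m τ} {x y : α}, cond m (x, y) (y, x) ∈ T.forcedPairs lo X f A τ →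
      x ∈ X ∧ y ∈ X := by
    intro m τ x y h
    cases m
    exacts [⟨h.2.2.1, h.2.1⟩, ⟨h.2.1, h.2.2.1⟩]
  have hrel : ∀ {m τ} {k i : Fin n}, cond m (a k, a i) (a i, a k) ∈ T.forcedPairs lo X f A τ →
      ∃ hτ : τ ∈ A, cond m (f τ (b k)) (f' τ (b k)) = b i := by
    intro m τ k i h
    cases m <;> obtain ⟨hτ, -, -, h⟩ := h <;> simp only [cond_false, cond_true, hab] at h
    · refine ⟨hτ, ?_⟩
      rw [cond_false, ← h]
      exact (hf τ).2.2.1 _ ((hab i ▸ T.height_restrict _ ((hXlev _ (haX i)).symm ▸ hloδ)).le)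
    · exact ⟨hτ, h⟩
  obtain ⟨k, rfl⟩ := hXa x (hmem h₁).1
  obtain ⟨i₁, rfl⟩ := hXa y₁ (hmem h₁).2
  obtain ⟨i₂, rfl⟩ := hXa y₂ (hmem h₂).2
  obtain ⟨hτ₁, e₁⟩ := hrel h₁
  obtain ⟨hτ₂, e₂⟩ := hrel h₂
  rw [hra, hra] at hy₁ hy₂
  obtain ⟨hi, hm, hτ⟩ := hb.2 k i₁ i₂ m₁ m₂ ⟨τ₁, hτ₁⟩ ⟨τ₂, hτ₂⟩ hy₁ hy₂ e₁ e₂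
  exact ⟨congrArg a hi, hm, congrArg Subtype.val hτ⟩

/-- The ranking lists `X` first, in the order of a separating enumeration of `X↾lo`. -/
theorem exists_rank_forcedPairs (hXdrop : Set.InjOn (fun x => T.restrict x lo) X) :
    ∃ r : α → ℕ, Set.InjOn r {x | T.height x = δ} ∧
      (AutoSepSet (fun τ : ↥A => f τ.1) (fun τ : ↥A => f' τ.1)
        ((fun x => T.restrict x lo) '' X) → RankSeparated r (T.forcedPairs lo X f A)) := by
  by_cases hs : AutoSepSet (fun τ : ↥A => f τ.1) (fun τ : ↥A => f' τ.1)
    ((fun x => T.restrict x lo) '' X)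
  swap
  · obtain ⟨r, hr⟩ := Set.countable_iff_exists_injOn.1 (T.level_countable δ)
    exact ⟨r, hr, fun h => absurd h hs⟩
  obtain ⟨n, b, hbinj, hbrange, hb⟩ := hs
  have hlift : ∀ k, ∃ x ∈ X, T.restrict x lo = b k := fun k =>
    (hbrange ▸ Set.mem_range_self k : b k ∈ (fun x => T.restrict x lo) '' X)
  choose a haX hab using hlift
  have hXa : ∀ x ∈ X, ∃ k, a k = x := fun x hx => by
    obtain ⟨k, hk⟩ : T.restrict x lo ∈ Set.range b := hbrange ▸ ⟨x, hx, rfl⟩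
    exact ⟨k, hXdrop (haX k) hx ((hab k).trans hk)⟩
  obtain ⟨r, hr, hra⟩ := exists_injOn_nat_extend (T.level_countable δ)
    (fun i j h => hbinj (by rw [← hab, ← hab, h]) : Function.Injective a)
  exact ⟨r, hr, fun _ => rankSeparated_forcedPairs hf hloδ hXlev hb haX hXa hab hra⟩

end Rank

theorem auto_family_extension_general
    (T : OmegaOneTree α) (lo δ : Ordinal) (hloδ : lo < δ) (hδ : δ < omega1)
    (X : Set α) (hXfin : X.Finite) (hXlev : ∀ x ∈ X, T.height x = δ)
    (hXdrop : Set.InjOn (fun x => T.restrict x lo) X)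
    {ι : Type} [Countable ι] (f f' : ι → α → α)
    (hf : ∀ τ, IsTreeAuto T lo (f τ) (f' τ))
    (A : Set ι) :
    ∃ g g' : ι → α → α,
      (∀ τ, IsTreeAuto T δ (g τ) (g' τ)) ∧
      (∀ τ, AutoExtends T lo (f τ) (f' τ) (g τ) (g' τ)) ∧
      (∀ τ ∈ A, AutoConsistentSet T (g τ) lo X) ∧
      (AutoSepSet (fun τ : ↥A => f τ.1) (fun τ : ↥A => f' τ.1)
          ((fun x => T.restrict x lo) '' X) →
        AutoSeparated T δ g g') := by
  obtain ⟨r, hr, hrsep⟩ := exists_rank_forcedPairs (A := A) hf hloδ.le hXlev hXdrop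
  obtain ⟨U, hP₀U, hU, hUtot, hUsep⟩ :=
    (OmegaOneTree.isStage_forcedPairs hf hloδ.le hXlev hXdrop hXfin r).exists_limit hf hloδ hδ hr
  choose g g' hg hext hgU using fun τ => (hU τ).exists_treeAuto (hf τ) hloδ.le hδ
    (fun s hs => (hUtot τ s hs).1) fun s hs => (hUtot τ s hs).2
  refine ⟨g, g', hg, hext, fun τ hτ x hx y hy => ?_,
    fun hs => (hUsep (hrsep hs)).autoSeparated hr hgU⟩
  have hxU := (hgU τ x (hXlev x hx)).1
  rw [(hext τ).1 _ (T.height_restrict x ((hXlev x hx).symm ▸ hloδ.le)).le]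
  exact ⟨fun h => (hU τ).right_unique hxU (hP₀U τ ⟨hτ, hx, hy, h⟩),
    fun h => h ▸ (hU τ).map_restrict _ hxU⟩

/-- Proposition 5.15: extension of a countable family of automorphisms from top
level `α` to any higher countable top level `δ`, consistent on a prescribed finite
set `X ⊆ T_δ`, which is separated provided the subfamily indexed by `A` was
separated on `X↾α`. -/
theorem auto_family_extension
    (T : OmegaOneTree α) (lo δ : Ordinal) (hloδ : lo < δ) (hδ : δ < omega1)
    (X : Set α) (hXfin : X.Finite) (hXlev : ∀ x ∈ X, T.height x = δ)
    (hXdrop : Set.InjOn (fun x => T.restrict x lo) X)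
    {ι : Type} [Countable ι] (f f' : ι → α → α)
    (hf : ∀ τ, IsTreeAuto T lo (f τ) (f' τ))
    (A : Set ι) (hAfin : A.Finite) :
    ∃ g g' : ι → α → α,
      (∀ τ, IsTreeAuto T δ (g τ) (g' τ)) ∧
      (∀ τ, AutoExtends T lo (f τ) (f' τ) (g τ) (g' τ)) ∧
      (∀ τ ∈ A, AutoConsistentSet T (g τ) lo X) ∧
      (AutoSepSet (fun τ : ↥A => f τ.1) (fun τ : ↥A => f' τ.1)
          ((fun x => T.restrict x lo) '' X) →
        AutoSeparated T δ g g') :=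
  auto_family_extension_general T lo δ hloδ hδ X hXfin hXlev hXdrop f f' hf A
end
end

section
/- Let α < ω₁ and let {g_τ : τ ∈ I} be a countable indexed family of automorphisms of T↾(α+1). Then {g_τ : τ ∈ I} is separated if and only if for every finite A ⊆ I and every finite X ⊆ T_α, the subfamily {g_τ : τ ∈ A} is separated on X. (This is the paper's Lemma 5.30, stated there for conditions p of the automorphism forcing with A ⊆ dom(p).) -/
noncomputable section

variable {α : Type} [PartialOrder α]

/-!
Separation on a tuple is a conjunction of conditions each of which mentions at most two
indices `τ`, so a tuple is separated for the whole family as soon as it is separated for every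
finite subfamily. A finite set `X` has only finitely many injective enumerations; if each of
them failed for some finite subfamily, the union of these subfamilies would be a finite
subfamily separated on `X` by none of them.
-/

theorem Set.Finite.exists_mem_forall_finite_of_antitone {κ ι : Type*} {S : Set κ}
    (hS : S.Finite) {P : κ → Set ι → Prop} (hP : ∀ k, Antitone (P k))
    (h : ∀ A : Set ι, A.Finite → ∃ k ∈ S, P k A) :
    ∃ k ∈ S, ∀ A : Set ι, A.Finite → P k A := by
  by_contra! hbad
  choose! B hBfin hB using hbad
  obtain ⟨k, hk, hkP⟩ := h (⋃ k ∈ S, B k) (hS.biUnion hBfin)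
  exact hB k hk (hP k (Set.subset_biUnion_of_mem hk) hkP)

theorem Set.Finite.setOf_range_eq {κ β : Type*} [Finite κ] {X : Set β} (hX : X.Finite) :
    {a : κ → β | Set.range a = X}.Finite :=
  (Set.Finite.pi fun _ => hX).subset fun _ ha i _ => ha ▸ Set.mem_range_self i

section Separation

variable {β ι κ : Type} {g g' : ι → β → β} {n : ℕ} {a : Fin n → β}

theorem AutoSepTuple.comp_injective (h : AutoSepTuple g g' a) {e : κ → ι}
    (he : Function.Injective e) : AutoSepTuple (g ∘ e) (g' ∘ e) a :=
  ⟨fun k τ => h.1 k (e τ), fun k i₁ i₂ m₁ m₂ τ₁ τ₂ hi₁ hi₂ e₁ e₂ =>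
    let ⟨hi, hm, hτ⟩ := h.2 k i₁ i₂ m₁ m₂ (e τ₁) (e τ₂) hi₁ hi₂ e₁ e₂
    ⟨hi, hm, he hτ⟩⟩

theorem AutoSepSet.comp_injective {X : Set β} (h : AutoSepSet g g' X) {e : κ → ι}
    (he : Function.Injective e) : AutoSepSet (g ∘ e) (g' ∘ e) X :=
  let ⟨n, a, ha_inj, ha_rng, ha⟩ := h
  ⟨n, a, ha_inj, ha_rng, ha.comp_injective he⟩

theorem autoSepTuple_subfamily_antitone (g g' : ι → β → β) (a : Fin n → β) :
    Antitone fun A : Set ι => AutoSepTuple (fun τ : A => g τ) (fun τ : A => g' τ) a :=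
  fun _ _ hAB h => h.comp_injective (Set.inclusion_injective hAB)

theorem autoSepTuple_iff_forall_finite :
    AutoSepTuple g g' a ↔
      ∀ A : Set ι, A.Finite → AutoSepTuple (fun τ : A => g τ) (fun τ : A => g' τ) a := by
  refine ⟨fun h A _ => h.comp_injective Subtype.val_injective, fun h => ⟨?_, ?_⟩⟩
  · intro k τ
    exact (h {τ} (Set.finite_singleton τ)).1 k ⟨τ, rfl⟩
  · intro k i₁ i₂ m₁ m₂ τ₁ τ₂ hi₁ hi₂ e₁ e₂
    obtain ⟨hi, hm, hτ⟩ := (h {τ₁, τ₂} (Set.toFinite _)).2 k i₁ i₂ m₁ m₂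
      ⟨τ₁, by simp⟩ ⟨τ₂, by simp⟩ hi₁ hi₂ e₁ e₂
    exact ⟨hi, hm, congrArg Subtype.val hτ⟩

theorem autoSepSet_iff_exists_fin_ncard {X : Set β} :
    AutoSepSet g g' X ↔
      ∃ a : Fin X.ncard → β, Function.Injective a ∧ Set.range a = X ∧ AutoSepTuple g g' a := by
  refine ⟨?_, fun ⟨a, ha⟩ => ⟨_, a, ha⟩⟩
  rintro ⟨n, a, ha_inj, ha_rng, ha⟩
  obtain rfl : X.ncard = n := by
    rw [← ha_rng, Set.ncard_range_of_injective ha_inj, Nat.card_fin]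
  exact ⟨a, ha_inj, ha_rng, ha⟩

theorem autoSepSet_of_forall_finite {X : Set β} (hX : X.Finite)
    (h : ∀ A : Set ι, A.Finite → AutoSepSet (fun τ : A => g τ) (fun τ : A => g' τ) X) :
    AutoSepSet g g' X := by
  simp_rw [autoSepSet_iff_exists_fin_ncard] at h ⊢
  have hS : {a : Fin X.ncard → β | Function.Injective a ∧ Set.range a = X}.Finite :=
    hX.setOf_range_eq.subset fun _ ha => ha.2
  obtain ⟨a, ⟨ha_inj, ha_rng⟩, ha⟩ := hS.exists_mem_forall_finite_of_antitone
      (fun a => autoSepTuple_subfamily_antitone g g' a)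
      fun A hA => by obtain ⟨a, ha_inj, ha_rng, ha⟩ := h A hA; exact ⟨a, ⟨ha_inj, ha_rng⟩, ha⟩
  exact ⟨a, ha_inj, ha_rng, autoSepTuple_iff_forall_finite.2 ha⟩

end Separation

theorem auto_separated_iff_finite_subfamilies_general
    (T : OmegaOneTree α) (lev : Ordinal)
    {ι : Type} (g g' : ι → α → α) :
    AutoSeparated T lev g g' ↔
      ∀ A : Set ι, A.Finite → ∀ X : Set α, X.Finite → (∀ x ∈ X, T.height x = lev) →
        AutoSepSet (fun τ : ↥A => g τ.1) (fun τ : ↥A => g' τ.1) X :=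
  ⟨fun hsep _ _ X hX hXlev => (hsep X hX hXlev).comp_injective Subtype.val_injective,
    fun h X hX hXlev => autoSepSet_of_forall_finite hX fun A hA => h A hA X hX hXlev⟩

/-- Lemma 5.30: a countable indexed family of automorphisms of `T↾(lev+1)` is
separated if and only if every finite subfamily is separated on every finite
subset of the level `T_lev`. -/
theorem auto_separated_iff_finite_subfamilies
    (T : OmegaOneTree α) (lev : Ordinal) (hlev : lev < omega1)
    {ι : Type} [Countable ι] (g g' : ι → α → α)
    (hg : ∀ τ, IsTreeAuto T lev (g τ) (g' τ)) :
    AutoSeparated T lev g g' ↔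
      ∀ A : Set ι, A.Finite → ∀ X : Set α, X.Finite → (∀ x ∈ X, T.height x = lev) →
        AutoSepSet (fun τ : ↥A => g τ.1) (fun τ : ↥A => g' τ.1) X :=
  auto_separated_iff_finite_subfamilies_general T lev g g'
end
end

section
/- Assume CH (2^ℵ₀ = ℵ₁). Then the automorphism forcing poset ℙ is ω₂-c.c.: every antichain of ℙ has cardinality less than ℵ₂. -/
noncomputable section

variable {α : Type} [PartialOrder α]

/-- A condition of the automorphism forcing `ℙ`: a function with countable domain
contained in `κ`, assigning to each index in its domain an automorphism of
`T↾(top+1)` (given together with its inverse) for a common top level `top < ω₁`. -/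
structure AutoCond (T : OmegaOneTree α) (κ : Ordinal) where
  dom : Set Ordinal
  dom_sub : dom ⊆ Set.Iio κ
  dom_countable : dom.Countable
  top : Ordinal
  top_lt : top < omega1
  fn : Ordinal → α → α
  inv : Ordinal → α → α
  fn_auto : ∀ τ ∈ dom, IsTreeAuto T top (fn τ) (inv τ)

/-- The order on the automorphism forcing: `q ≤ p` iff `dom p ⊆ dom q` and for
every `τ ∈ dom p`, `q(τ)` extends `p(τ)` as an automorphism. -/
def AutoCondLE {T : OmegaOneTree α} {κ : Ordinal} (q p : AutoCond T κ) : Prop :=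
  p.dom ⊆ q.dom ∧ p.top ≤ q.top ∧
    ∀ τ ∈ p.dom, ∀ x : α, T.height x ≤ p.top →
      q.fn τ x = p.fn τ x ∧ q.inv τ x = p.inv τ x

/-- Compatibility in the automorphism forcing. -/
def AutoCompatible {T : OmegaOneTree α} {κ : Ordinal} (p q : AutoCond T κ) : Prop :=
  ∃ r : AutoCond T κ, AutoCondLE r p ∧ AutoCondLE r q

/-!
Sort the antichain by top level: there are only `ℵ₁` top levels below `ω₁`. Two conditions
with the same top level `β` are compatible as soon as their automorphisms agree on
`T↾(β+1)` at every common index, so the conditions of one top level form a family of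
countable partial functions from `κ` to the `2^ℵ₀ = ℵ₁` possible traces on the countable
set `T↾(β+1)`, any two of which disagree somewhere on their common domain.

Under `ℵ₁^ℵ₀ = ℵ₁` such a family has at most `ℵ₁` members. Along `ω₁`, close a set `Z`
of size `ℵ₁` off under choosing, for each of the `ℵ₁` possible graphs over `Z`, one member
realising it, and adding its domain to `Z`. A member `i` meets the final union in a
countable set, which lies in some stage `Z`; the representative chosen for the graph of `i`
over `Z` has its domain inside the union, so both meet only inside `Z`, where they agree.
As distinct members disagree somewhere, every member is one of the `ℵ₁` representatives.
-/
open Cardinal Ordinal Set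

universe u v

theorem continuum_eq_aleph_one_iff : continuum.{u} = ℵ₁ ↔ continuum.{v} = ℵ₁ := by
  rw [← Cardinal.lift_inj.{u, v} (a := continuum.{u}),
    ← Cardinal.lift_inj.{v, u} (a := continuum.{v})]
  simp

theorem aleph_one_power_aleph0 (hCH : continuum.{u} = ℵ₁) : ℵ₁ ^ ℵ₀ = (ℵ₁ : Cardinal.{u}) := by
  rw [← hCH, continuum_power_aleph0]

theorem mk_iUnion_le_of_le {ι α : Type u} {f : ι → Set α} {c : Cardinal.{u}} (hc : ℵ₀ ≤ c)
    (hι : #ι ≤ c) (hf : ∀ i, #(f i) ≤ c) : #(⋃ i, f i) ≤ c :=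
  (mk_iUnion_le f).trans <| (mul_le_mul' hι (ciSup_le' hf)).trans (mul_eq_self hc).le

theorem mk_biUnion_le_of_le {ι α : Type u} {f : ι → Set α} {s : Set ι} {c : Cardinal.{u}}
    (hc : ℵ₀ ≤ c) (hs : #s ≤ c) (hf : ∀ i ∈ s, #(f i) ≤ c) : #(⋃ i ∈ s, f i) ≤ c := by
  rw [biUnion_eq_iUnion]
  exact mk_iUnion_le_of_le hc hs fun i => hf i i.2

theorem mk_setOf_countable_le (hCH : ℵ₁ ^ ℵ₀ = (ℵ₁ : Cardinal.{u})) {X : Type u}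
    (hX : #X ≤ ℵ₁) : #{s : Set X | s.Countable} ≤ ℵ₁ := by
  have := mk_bounded_set_le X ℵ₀
  simp only [le_aleph0_iff_set_countable] at this
  refine this.trans ?_
  rw [← hCH]
  exact power_le_power_right (max_le hX (aleph0_le_aleph 1))

theorem exists_subset_biUnion_Iio {Ω C : Type*} [LinearOrder Ω] (hΩ : ℵ₀ < Order.cof Ω)
    {A : Ω → Set C} {Y : Set C} (hY : Y.Countable) (hYA : Y ⊆ ⋃ ξ, A ξ) :
    ∃ ξ, Y ⊆ ⋃ ζ < ξ, A ζ := by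
  choose ζ hζ using fun y : Y => mem_iUnion.1 (hYA y.2)
  have : Countable Y := hY.to_subtype
  have hbdd : ¬ IsCofinal (range ζ) := fun h =>
    (Order.cof_le h).not_gt (hΩ.trans_le' (countable_range ζ).le_aleph0)
  obtain ⟨ξ, hξ⟩ := not_isCofinal_iff.1 hbdd
  exact ⟨ξ, fun y hy => mem_biUnion (hξ _ ⟨⟨y, hy⟩, rfl⟩) (hζ ⟨y, hy⟩)⟩

theorem exists_eq_biUnion_Iio (Ω : Type*) [LT Ω] [WellFoundedLT Ω] {β : Type*}
    (F : Set β → Set β) : ∃ Z : Ω → Set β, ∀ ξ, Z ξ = ⋃ ζ < ξ, F (Z ζ) :=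
  ⟨wellFounded_lt.fix fun ξ Z => ⋃ ζ, ⋃ h : ζ < ξ, F (Z ζ h), wellFounded_lt.fix_eq _⟩

section PartialFunctions

variable {I C H : Type u} (D : I → Set C) (t : I → C → H)

def support (W : Set I) : Set C :=
  ⋃ j ∈ W, D j

def graphOn (Z : Set C) (i : I) : Set (Z × H) :=
  (fun c : Z => (c, t i c)) '' {c | ↑c ∈ D i}

theorem support_iUnion {ι : Sort*} (W : ι → Set I) :
    support D (⋃ k, W k) = ⋃ k, support D (W k) :=
  biUnion_iUnion W D

variable {D} in
theorem mk_support_le (hD : ∀ i, (D i).Countable) {W : Set I} (hW : #W ≤ ℵ₁) :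
    #(support D W) ≤ ℵ₁ :=
  mk_biUnion_le_of_le (aleph0_le_aleph 1) hW fun j _ =>
    (hD j).le_aleph0.trans (aleph0_le_aleph 1)

section Representatives

variable [Nonempty I]

def representative (Z : Set C) (i : I) : I :=
  Function.invFun (graphOn D t Z) (graphOn D t Z i)

def representatives (Z : Set C) : Set I :=
  Function.invFun (graphOn D t Z) '' {s | s.Countable}

variable {D t}

theorem representative_mem_representatives (hD : ∀ i, (D i).Countable) (Z : Set C) (i : I) :
    representative D t Z i ∈ representatives D t Z :=
  ⟨_, ((hD i).preimage Subtype.val_injective).image _, rfl⟩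

theorem apply_representative_eq {Z : Set C} {i : I} {c : C} (hcZ : c ∈ Z) (hci : c ∈ D i) :
    t (representative D t Z i) c = t i c := by
  have hgraph : graphOn D t Z (representative D t Z i) = graphOn D t Z i :=
    Function.invFun_eq ⟨i, rfl⟩
  have hmem : ((⟨c, hcZ⟩ : Z), t i c) ∈ graphOn D t Z (representative D t Z i) :=
    hgraph ▸ ⟨⟨c, hcZ⟩, hci, rfl⟩
  obtain ⟨c', -, hc'⟩ := hmem
  simp only [Prod.mk.injEq] at hc'
  obtain ⟨rfl, h⟩ := hc'
  exact h

theorem mk_representatives_le (hCH : ℵ₁ ^ ℵ₀ = (ℵ₁ : Cardinal.{u})) (hH : #H ≤ ℵ₁)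
    {Z : Set C} (hZ : #Z ≤ ℵ₁) : #(representatives D t Z) ≤ ℵ₁ :=
  mk_image_le.trans <| mk_setOf_countable_le hCH <| by
    rw [mk_prod, Cardinal.lift_id, Cardinal.lift_id]
    exact (mul_le_mul' hZ hH).trans (mul_eq_self (aleph0_le_aleph 1)).le

theorem exists_small_agreeing_subfamily (hCH : ℵ₁ ^ ℵ₀ = (ℵ₁ : Cardinal.{u}))
    (hH : #H ≤ ℵ₁) (hD : ∀ i, (D i).Countable) :
    ∃ W : Set I, #W ≤ ℵ₁ ∧ ∀ i, ∃ j ∈ W, ∀ c ∈ D i, c ∈ D j → t i c = t j c := by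
  obtain ⟨Z, hZ⟩ := exists_eq_biUnion_Iio (ω₁ : Ordinal.{u}).ToType
    fun Z => support D (representatives D t Z)
  have hΩ : #(ω₁ : Ordinal.{u}).ToType = ℵ₁ := by simp
  have hZ_le : ∀ ξ, #(Z ξ) ≤ ℵ₁ := by
    intro ξ
    induction ξ using WellFoundedLT.induction with | _ ξ ih => ?_
    rw [hZ]
    exact mk_biUnion_le_of_le (aleph0_le_aleph 1) ((mk_set_le _).trans hΩ.le) fun ζ hζ =>
      mk_support_le hD (mk_representatives_le hCH hH (ih ζ hζ))
  set W := ⋃ ξ, representatives D t (Z ξ)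
  refine ⟨W, mk_iUnion_le_of_le (aleph0_le_aleph 1) hΩ.le fun ξ =>
    mk_representatives_le hCH hH (hZ_le ξ), fun i => ?_⟩
  have hcof : ℵ₀ < Order.cof (ω₁ : Ordinal.{u}).ToType := by simp [Ordinal.cof_toType]
  obtain ⟨ξ, hξ⟩ := exists_subset_biUnion_Iio hcof ((hD i).mono inter_subset_left)
    (inter_subset_right.trans (support_iUnion D _).le)
  rw [← hZ] at hξ
  have hjW : representative D t (Z ξ) i ∈ W :=
    mem_iUnion_of_mem ξ (representative_mem_representatives hD _ i)
  refine ⟨_, hjW, fun c hci hcj => ?_⟩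
  exact (apply_representative_eq (hξ ⟨hci, mem_biUnion hjW hcj⟩) hci).symm

end Representatives

theorem mk_le_aleph_one_of_agree_eq (hCH : ℵ₁ ^ ℵ₀ = (ℵ₁ : Cardinal.{u})) (hH : #H ≤ ℵ₁)
    (hD : ∀ i, (D i).Countable)
    (hagree : ∀ i j, (∀ c ∈ D i, c ∈ D j → t i c = t j c) → i = j) :
    #I ≤ ℵ₁ := by
  rcases isEmpty_or_nonempty I with hI | hI
  · simp
  obtain ⟨W, hW, hdense⟩ := exists_small_agreeing_subfamily hCH hH hD
  have hWuniv : W = Set.univ := Set.eq_univ_of_forall fun i => by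
    obtain ⟨j, hj, hij⟩ := hdense i
    exact hagree i j hij ▸ hj
  rwa [← mk_univ, ← hWuniv]

end PartialFunctions

theorem mk_arrow_le_continuum {X Y : Type u} [Countable X] [Countable Y] :
    #(X → Y) ≤ 𝔠 := by
  rw [← power_def, ← aleph0_power_aleph0]
  exact (power_le_power_right mk_le_aleph0).trans
    (power_le_power_left aleph0_ne_zero mk_le_aleph0)

namespace OmegaOneTree

variable (T : OmegaOneTree α)

theorem countable_setOf_height_le {β : Ordinal} (hβ : β < omega1) :
    {x | T.height x ≤ β}.Countable := by
  have hsucc : Order.succ β < omega1 := (isSuccLimit_ord (aleph0_le_aleph 1)).succ_lt hβ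
  have hIic : (Iic β).Countable := by
    rw [← Order.Iio_succ, ← le_aleph0_iff_set_countable, Cardinal.mk_Iio_ordinal,
      lift_le_aleph0, ← lt_aleph_one_iff]
    exact lt_ord.1 hsucc
  refine (hIic.biUnion fun γ _ => T.level_countable γ).mono fun x hx => ?_
  exact mem_biUnion (show T.height x ∈ Iic β from hx) (show T.height x = T.height x from rfl)

-- The fallback value `x` never matters: automorphisms of `T↾(β+1)` map it into itself.
def traceBelow (β : Ordinal) (g : α → α) :
    {x // T.height x ≤ β} → {x // T.height x ≤ β} :=
  fun x => if h : T.height (g x) ≤ β then ⟨g x, h⟩ else x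

variable {T}

theorem eqOn_of_traceBelow_eq {β : Ordinal} {g g' : α → α}
    (hg : MapsTo g {x | T.height x ≤ β} {x | T.height x ≤ β})
    (hg' : MapsTo g' {x | T.height x ≤ β} {x | T.height x ≤ β})
    (h : T.traceBelow β g = T.traceBelow β g') : EqOn g g' {x | T.height x ≤ β} := by
  intro x hx
  have hx' := congrArg Subtype.val (congrFun h ⟨x, hx⟩)
  simpa only [traceBelow, dif_pos (show T.height (g x) ≤ β from hg hx),
    dif_pos (show T.height (g' x) ≤ β from hg' hx)] using hx'

end OmegaOneTree

theorem IsTreeAuto.mapsTo_fn {T : OmegaOneTree α} {β : Ordinal} {g g' : α → α}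
    (h : IsTreeAuto T β g g') : MapsTo g {x | T.height x ≤ β} {x | T.height x ≤ β} :=
  fun x hx => (h.1 x hx).trans_le hx

theorem IsTreeAuto.mapsTo_inv {T : OmegaOneTree α} {β : Ordinal} {g g' : α → α}
    (h : IsTreeAuto T β g g') : MapsTo g' {x | T.height x ≤ β} {x | T.height x ≤ β} :=
  fun x hx => (h.2.1 x hx).trans_le hx

namespace AutoCond

variable {T : OmegaOneTree α} {κ : Ordinal}

open scoped Classical in
theorem compatible_of_eqOn {p q : AutoCond T κ} (htop : p.top = q.top)
    (hagree : ∀ τ ∈ p.dom, τ ∈ q.dom → EqOn (p.fn τ) (q.fn τ) {x | T.height x ≤ p.top} ∧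
      EqOn (p.inv τ) (q.inv τ) {x | T.height x ≤ p.top}) :
    AutoCompatible p q := by
  let r : AutoCond T κ :=
    { dom := p.dom ∪ q.dom
      dom_sub := union_subset p.dom_sub q.dom_sub
      dom_countable := p.dom_countable.union q.dom_countable
      top := p.top
      top_lt := p.top_lt
      fn := p.dom.piecewise p.fn q.fn
      inv := p.dom.piecewise p.inv q.inv
      fn_auto := fun τ hτ => by
        by_cases hp : τ ∈ p.dom
        · simpa [piecewise_eq_of_mem _ _ _ hp] using p.fn_auto τ hp
        · simpa [piecewise_eq_of_notMem _ _ _ hp, htop] using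
            q.fn_auto τ (hτ.resolve_left hp) }
  refine ⟨r, ⟨subset_union_left, le_rfl, fun τ hτ x _ => ?_⟩,
    ⟨subset_union_right, htop.ge, fun τ hτ x hx => ?_⟩⟩
  · simp [r, piecewise_eq_of_mem _ _ _ hτ]
  · by_cases hp : τ ∈ p.dom
    · simpa [r, piecewise_eq_of_mem _ _ _ hp] using
        ⟨(hagree τ hp hτ).1 (htop ▸ hx), (hagree τ hp hτ).2 (htop ▸ hx)⟩
    · simp [r, piecewise_eq_of_notMem _ _ _ hp]

theorem mk_le_aleph_one_of_top_eq (hCH : (𝔠 : Cardinal.{u + 1}) = ℵ₁) {κ : Ordinal.{u}}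
    {I : Type (u + 1)} (P : I → AutoCond T κ) (hP : ∀ i j, AutoCompatible (P i) (P j) → i = j)
    {β : Ordinal} (hβ : β < omega1) (htop : ∀ i, (P i).top = β) : #I ≤ ℵ₁ := by
  let L := {x // T.height x ≤ β}
  have : Countable L := (T.countable_setOf_height_le hβ).to_subtype
  refine mk_le_aleph_one_of_agree_eq (H := ULift.{u + 1} ((L → L) × (L → L)))
    (D := fun i => (P i).dom)
    (t := fun i τ => ULift.up (T.traceBelow β ((P i).fn τ), T.traceBelow β ((P i).inv τ)))
    (aleph_one_power_aleph0 hCH) ?_ (fun i => (P i).dom_countable)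
    fun i j hij => hP i j (compatible_of_eqOn ((htop i).trans (htop j).symm) fun τ hi hj => ?_)
  · rw [mk_uLift, mk_prod, Cardinal.lift_id]
    calc _ ≤ Cardinal.lift.{u + 1} (𝔠 * 𝔠) :=
          lift_le.2 (mul_le_mul' mk_arrow_le_continuum mk_arrow_le_continuum)
      _ = ℵ₁ := by rw [continuum_mul_self, lift_continuum, hCH]
  · have hτ := hij τ hi hj
    simp only [ULift.up_inj, Prod.mk.injEq] at hτ
    have hPi := (P i).fn_auto τ hi
    have hPj := (P j).fn_auto τ hj
    rw [htop] at hPi hPj ⊢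
    exact ⟨OmegaOneTree.eqOn_of_traceBelow_eq hPi.mapsTo_fn hPj.mapsTo_fn hτ.1,
      OmegaOneTree.eqOn_of_traceBelow_eq hPi.mapsTo_inv hPj.mapsTo_inv hτ.2⟩

end AutoCond

theorem auto_forcing_omega2_cc_general
    (T : OmegaOneTree α) (κ : Ordinal)
    (hCH : (2 : Cardinal.{1}) ^ (Cardinal.aleph0 : Cardinal.{1}) = Cardinal.aleph 1)
    (A : Set (AutoCond T κ))
    (hanti : ∀ p ∈ A, ∀ q ∈ A, p ≠ q → ¬ AutoCompatible p q) :
    Cardinal.mk ↥A < Cardinal.aleph 2 := by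
  have hCH' : (𝔠 : Cardinal.{u_1 + 1}) = ℵ₁ :=
    continuum_eq_aleph_one_iff.1 (two_power_aleph0 ▸ hCH)
  let top (p : A) : ULift.{u_1 + 1} (Iio omega1) := ULift.up ⟨p.1.top, p.1.top_lt⟩
  have hfiber (b) : #(top ⁻¹' {b}) ≤ ℵ₁ :=
    AutoCond.mk_le_aleph_one_of_top_eq hCH' (fun p => p.1.1)
      (fun p q hpq => Subtype.ext <| Subtype.ext <|
        by_contra fun hne => hanti _ p.1.2 _ q.1.2 hne hpq)
      b.down.2 fun p => congrArg (fun b => b.down.1) p.2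
  calc #A ≤ #(ULift.{u_1 + 1} (Iio omega1)) * ℵ₁ := mk_le_mk_mul_of_mk_preimage_le top hfiber
    _ ≤ ℵ₁ * ℵ₁ := by
        gcongr
        simp [omega1]
    _ = ℵ₁ := mul_eq_self (aleph0_le_aleph 1)
    _ < ℵ_ 2 := aleph_lt_aleph.2 one_lt_two

/-- Lemma 5.36: assuming CH, the automorphism forcing `ℙ` is `ω₂`-c.c.:
every antichain has cardinality less than `ℵ₂`. -/
theorem auto_forcing_omega2_cc
    (T : OmegaOneTree α) (κ : Ordinal) (hκ : 0 < κ)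
    (hCH : (2 : Cardinal.{1}) ^ (Cardinal.aleph0 : Cardinal.{1}) = Cardinal.aleph 1)
    (A : Set (AutoCond T κ))
    (hanti : ∀ p ∈ A, ∀ q ∈ A, p ≠ q → ¬ AutoCompatible p q) :
    Cardinal.mk ↥A < Cardinal.aleph 2 :=
  auto_forcing_omega2_cc_general T κ hCH A hanti
end
end
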